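/- Fix γ > 0, an integer m ≥ 2, reals 0 = s₀ < s₁ < … < s_m = 1 and α₁ > α₂ > … > α_m = 0, and let u, N_m, D_m be as defined. Then the polynomial N_m(w) − D_m(w) has degree at most m (i.e., the coefficients of w^{m+1} in N_m and D_m coincide), and w = 0 is a root of N_m − D_m of multiplicity at least 2 (i.e., both the constant and the linear coefficients of N_m − D_m vanish). -/

import Mathlib

open MeasureTheory Filter Set Polynomial
open scoped Topology

/-- The global location for the piecewise-constant profile given by the data
`0 = s₀ < s₁ < … < s_m = 1`, `α₁ > … > α_m = 0`. -/
noncomputable def uPW (γ : ℝ) (m : ℕ) (s α : ℕ → ℝ) : ℝ :=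
  (1/γ) * Real.log ((Real.exp γ - 1) /
    ∑ j ∈ Finset.Icc 1 m,
      (Real.exp (γ*(s j - α j)) - Real.exp (γ*(s (j-1) - α j))))

/-- The polynomial `N_m(w) = (1 − w e^γ) ∏_{j=1}^m (1 − w e^{γ(u − α_j + s_{j−1})})`. -/
noncomputable def NmPoly (γ : ℝ) (m : ℕ) (s α : ℕ → ℝ) : Polynomial ℝ :=
  (1 - C (Real.exp γ) * X) *
    ∏ j ∈ Finset.Icc 1 m, (1 - C (Real.exp (γ*(uPW γ m s α - α j + s (j-1)))) * X)

/-- The polynomial `D_m(w) = (1 − w) ∏_{j=1}^m (1 − w e^{γ(u − α_j + s_j)})`. -/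
noncomputable def DmPoly (γ : ℝ) (m : ℕ) (s α : ℕ → ℝ) : Polynomial ℝ :=
  (1 - X) *
    ∏ j ∈ Finset.Icc 1 m, (1 - C (Real.exp (γ*(uPW γ m s α - α j + s j))) * X)

/-!
Write `N_m = (1 - e^γ w) ∏ⱼ (1 - aⱼ w)` and `D_m = (1 - w) ∏ⱼ (1 - bⱼ w)`. Both have constant
coefficient `1`; their coefficients of `w^{m+1}` are `(-1)^{m+1} e^γ ∏ aⱼ` and `(-1)^{m+1} ∏ bⱼ`,
and those of `w` are `-(e^γ + ∑ aⱼ)` and `-(1 + ∑ bⱼ)`. The ratios `bⱼ / aⱼ = e^{γ(sⱼ - sⱼ₋₁)}`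
telescope to `e^{γ(s_m - s₀)} = e^γ`, so the top coefficients agree; and
`∑ (bⱼ - aⱼ) = e^{γu} ∑ (e^{γ(sⱼ - αⱼ)} - e^{γ(sⱼ₋₁ - αⱼ)}) = e^γ - 1` is precisely the equation
defining `u`, so the linear coefficients agree.
-/

open Finset

namespace Polynomial

variable {R ι : Type*} [CommRing R]

theorem coeff_succ_one_sub_C_mul_X_mul (a : R) (p : R[X]) (n : ℕ) :
    ((1 - C a * X) * p).coeff (n + 1) = p.coeff (n + 1) - a * p.coeff n := by
  rw [sub_mul, one_mul, coeff_sub, mul_assoc, coeff_C_mul, coeff_X_mul]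

theorem natDegree_one_sub_C_mul_X_le (a : R) : (1 - C a * X).natDegree ≤ 1 := by
  compute_degree

theorem degree_sub_le_of_coeff_succ_eq {p q : R[X]} {n : ℕ} (hp : p.natDegree ≤ n + 1)
    (hq : q.natDegree ≤ n + 1) (h : p.coeff (n + 1) = q.coeff (n + 1)) :
    (p - q).degree ≤ n := by
  refine degree_le_of_natDegree_le (natDegree_le_pred (n := n + 1) ?_ ?_)
  · exact (natDegree_sub_le p q).trans (max_le hp hq)
  · rw [coeff_sub, h, sub_self]

section ProdOneSubCMulX

variable (a : R) (t : Finset ι) (c : ι → R)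

theorem natDegree_prod_one_sub_C_mul_X_le :
    (∏ j ∈ t, (1 - C (c j) * X)).natDegree ≤ #t :=
  (natDegree_prod_le t _).trans <| by
    simpa using sum_le_sum fun j (_ : j ∈ t) => natDegree_one_sub_C_mul_X_le (c j)

theorem coeff_zero_prod_one_sub_C_mul_X : (∏ j ∈ t, (1 - C (c j) * X)).coeff 0 = 1 := by
  simp [coeff_zero_prod]

theorem coeff_one_prod_one_sub_C_mul_X [DecidableEq ι] :
    (∏ j ∈ t, (1 - C (c j) * X)).coeff 1 = -∑ j ∈ t, c j := by
  induction t using Finset.induction_on with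
  | empty => simp [coeff_one]
  | insert i t hi ih =>
    rw [prod_insert hi, coeff_succ_one_sub_C_mul_X_mul (n := 0), ih,
      coeff_zero_prod_one_sub_C_mul_X, sum_insert hi]
    ring

theorem coeff_card_prod_one_sub_C_mul_X :
    (∏ j ∈ t, (1 - C (c j) * X)).coeff #t = (-1) ^ #t * ∏ j ∈ t, c j := by
  have h := coeff_prod_of_natDegree_le (s := t) (fun j => 1 - C (c j) * X) 1
    fun j _ => natDegree_one_sub_C_mul_X_le (c j)
  rw [mul_one] at h
  rw [h, ← prod_neg]
  simp [coeff_one]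

theorem natDegree_one_sub_C_mul_X_mul_prod_le :
    ((1 - C a * X) * ∏ j ∈ t, (1 - C (c j) * X)).natDegree ≤ #t + 1 :=
  natDegree_mul_le.trans <| by
    linarith [natDegree_one_sub_C_mul_X_le a, natDegree_prod_one_sub_C_mul_X_le t c]

theorem coeff_zero_one_sub_C_mul_X_mul_prod :
    ((1 - C a * X) * ∏ j ∈ t, (1 - C (c j) * X)).coeff 0 = 1 := by
  simp [mul_coeff_zero, coeff_zero_prod_one_sub_C_mul_X]

theorem coeff_one_one_sub_C_mul_X_mul_prod [DecidableEq ι] :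
    ((1 - C a * X) * ∏ j ∈ t, (1 - C (c j) * X)).coeff 1 = -(a + ∑ j ∈ t, c j) := by
  rw [coeff_succ_one_sub_C_mul_X_mul (n := 0), coeff_one_prod_one_sub_C_mul_X,
    coeff_zero_prod_one_sub_C_mul_X]
  ring

theorem coeff_card_succ_one_sub_C_mul_X_mul_prod :
    ((1 - C a * X) * ∏ j ∈ t, (1 - C (c j) * X)).coeff (#t + 1) =
      (-1) ^ (#t + 1) * (a * ∏ j ∈ t, c j) := by
  rw [coeff_succ_one_sub_C_mul_X_mul, coeff_card_prod_one_sub_C_mul_X,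
    coeff_eq_zero_of_natDegree_lt
      ((natDegree_prod_one_sub_C_mul_X_le t c).trans_lt (#t).lt_succ_self)]
  ring

end ProdOneSubCMulX

end Polynomial

theorem Finset.sum_Icc_one_sub_pred {M : Type*} [AddCommGroup M] (f : ℕ → M) (m : ℕ) :
    ∑ j ∈ Icc 1 m, (f j - f (j - 1)) = f m - f 0 := by
  induction m with
  | zero => simp
  | succ m ih =>
    rw [sum_Icc_succ_top (by omega), ih, Nat.add_sub_cancel]
    abel

open Real

theorem exp_mul_prod_exp_eq_prod_exp {γ : ℝ} {m : ℕ} {s : ℕ → ℝ} (u : ℝ) (α : ℕ → ℝ)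
    (hs0 : s 0 = 0) (hsm : s m = 1) :
    exp γ * ∏ j ∈ Icc 1 m, exp (γ * (u - α j + s (j - 1))) =
      ∏ j ∈ Icc 1 m, exp (γ * (u - α j + s j)) := by
  rw [← exp_sum, ← exp_sum, ← exp_add]
  congr 1
  have htel := sum_Icc_one_sub_pred s m
  rw [hs0, hsm] at htel
  calc γ + ∑ j ∈ Icc 1 m, γ * (u - α j + s (j - 1))
      = γ * ∑ j ∈ Icc 1 m, (s j - s (j - 1)) + ∑ j ∈ Icc 1 m, γ * (u - α j + s (j - 1)) := by
        rw [htel]; ring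
    _ = ∑ j ∈ Icc 1 m, γ * (u - α j + s j) := by
        rw [mul_sum, ← sum_add_distrib]
        exact sum_congr rfl fun j _ => by ring

theorem sum_exp_sub_pos {γ : ℝ} {m : ℕ} {s : ℕ → ℝ} (α : ℕ → ℝ) (hγ : 0 < γ) (hm : 0 < m)
    (hs : ∀ j < m, s j < s (j + 1)) :
    0 < ∑ j ∈ Icc 1 m, (exp (γ * (s j - α j)) - exp (γ * (s (j - 1) - α j))) := by
  refine sum_pos (fun j hj => ?_) ⟨1, mem_Icc.mpr ⟨le_rfl, hm⟩⟩
  obtain ⟨hj1, hjm⟩ := mem_Icc.mp hj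
  have hsj : s (j - 1) < s j := by simpa [Nat.sub_add_cancel hj1] using hs (j - 1) (by omega)
  have : γ * (s (j - 1) - α j) < γ * (s j - α j) := by gcongr
  linarith [exp_lt_exp.mpr this]

theorem sum_exp_sub_sum_exp_uPW {γ : ℝ} {m : ℕ} {s : ℕ → ℝ} (α : ℕ → ℝ) (hγ : 0 < γ)
    (hm : 0 < m) (hs : ∀ j < m, s j < s (j + 1)) :
    ∑ j ∈ Icc 1 m, exp (γ * (uPW γ m s α - α j + s j)) -
      ∑ j ∈ Icc 1 m, exp (γ * (uPW γ m s α - α j + s (j - 1))) = exp γ - 1 := by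
  have hS := sum_exp_sub_pos α hγ hm hs
  have hexp : exp (γ * uPW γ m s α) = (exp γ - 1) /
      ∑ j ∈ Icc 1 m, (exp (γ * (s j - α j)) - exp (γ * (s (j - 1) - α j))) := by
    rw [uPW, ← mul_assoc, mul_one_div_cancel hγ.ne', one_mul,
      exp_log (div_pos (by linarith [add_one_lt_exp hγ.ne']) hS)]
  rw [← sum_sub_distrib, ← div_mul_cancel₀ (exp γ - 1) hS.ne', ← hexp, mul_sum]
  refine sum_congr rfl fun j _ => ?_
  rw [mul_sub, ← exp_add, ← exp_add]
  ring_nf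

theorem Nm_sub_Dm_degree_and_double_root_at_zero_general
    (γ : ℝ) (hγ : 0 < γ) (m : ℕ) (hm : 2 ≤ m) (s α : ℕ → ℝ)
    (hs0 : s 0 = 0) (hsm : s m = 1)
    (hs : ∀ j < m, s j < s (j+1)) :
    (NmPoly γ m s α).coeff (m+1) = (DmPoly γ m s α).coeff (m+1) ∧
    (NmPoly γ m s α - DmPoly γ m s α).degree ≤ (m : ℕ) ∧
    (NmPoly γ m s α - DmPoly γ m s α).coeff 0 = 0 ∧
    (NmPoly γ m s α - DmPoly γ m s α).coeff 1 = 0 := by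
  have hN : NmPoly γ m s α = (1 - C (exp γ) * X) *
      ∏ j ∈ Icc 1 m, (1 - C (exp (γ * (uPW γ m s α - α j + s (j - 1)))) * X) := rfl
  have hD : DmPoly γ m s α = (1 - C 1 * X) *
      ∏ j ∈ Icc 1 m, (1 - C (exp (γ * (uPW γ m s α - α j + s j))) * X) := by
    rw [DmPoly, map_one, one_mul]
  have hcard : #(Icc 1 m) = m := by simp
  have htop : (NmPoly γ m s α).coeff (m + 1) = (DmPoly γ m s α).coeff (m + 1) := by
    have hcoeff := fun a c => coeff_card_succ_one_sub_C_mul_X_mul_prod (R := ℝ) a (Icc 1 m) c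
    simp only [hcard] at hcoeff
    rw [hN, hD, hcoeff, hcoeff, one_mul, exp_mul_prod_exp_eq_prod_exp _ α hs0 hsm]
  refine ⟨htop, degree_sub_le_of_coeff_succ_eq ?_ ?_ htop, ?_, ?_⟩
  · simpa only [hN, hcard] using natDegree_one_sub_C_mul_X_mul_prod_le _ (Icc 1 m) _
  · simpa only [hD, hcard] using natDegree_one_sub_C_mul_X_mul_prod_le _ (Icc 1 m) _
  · rw [coeff_sub, hN, hD, coeff_zero_one_sub_C_mul_X_mul_prod,
      coeff_zero_one_sub_C_mul_X_mul_prod, sub_self]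
  · rw [coeff_sub, hN, hD, coeff_one_one_sub_C_mul_X_mul_prod,
      coeff_one_one_sub_C_mul_X_mul_prod]
    linear_combination sum_exp_sub_sum_exp_uPW α hγ (by omega) hs

/-- `N_m − D_m` has degree at most `m` (the coefficients of `w^{m+1}` agree),
and `w = 0` is a root of `N_m − D_m` of multiplicity at least `2` (the constant and linear
coefficients vanish). -/
theorem Nm_sub_Dm_degree_and_double_root_at_zero
    (γ : ℝ) (hγ : 0 < γ) (m : ℕ) (hm : 2 ≤ m) (s α : ℕ → ℝ)
    (hs0 : s 0 = 0) (hsm : s m = 1)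
    (hs : ∀ j < m, s j < s (j+1))
    (hα : ∀ j, 1 ≤ j → j < m → α (j+1) < α j)
    (hαm : α m = 0) :
    (NmPoly γ m s α).coeff (m+1) = (DmPoly γ m s α).coeff (m+1) ∧
    (NmPoly γ m s α - DmPoly γ m s α).degree ≤ (m : ℕ) ∧
    (NmPoly γ m s α - DmPoly γ m s α).coeff 0 = 0 ∧
    (NmPoly γ m s α - DmPoly γ m s α).coeff 1 = 0 :=
  Nm_sub_Dm_degree_and_double_root_at_zero_general γ hγ m hm s α hs0 hsm hs
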